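/- arXiv:2602.09833 — 4 statements merged into one kernel-verified Lean document; each statement's English description precedes it below -/
import Mathlib

section
/- Let S be the set of strings (z₁,…,z_{2l}) of length 2l over the alphabet {1,…,M} such that every character that appears in the string appears at least twice. Then |S| ≤ (2Ml)^l. -/
open Finset

open scoped Classical in
/-- Position of the `b`-th element of pair `t` in `Fin (2*l)`. -/
def posIdx (l : ℕ) (t : Fin l) (b : Fin 2) : Fin (2 * l) :=
  ⟨2 * t.val + b.val, by omega⟩

/-- Decoder: from a code word of length `l` over alphabet `Fin M × Fin l × Fin 2`,
reconstruct a string of length `2*l` over `Fin M`. -/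
def decodeFn (M l : ℕ) (c : Fin l → Fin M × Fin l × Fin 2) (p : Fin (2 * l)) : Fin M :=
  let t : Fin l := ⟨p.val / 2, by omega⟩
  if ((c t).2.2 : ℕ) = p.val % 2 then (c t).1 else (c (c t).2.1).1

open scoped Classical in
lemma exists_code {M l : ℕ} (z : Fin (2 * l) → Fin M)
    (hz : ∀ i, ∃ j, j ≠ i ∧ z j = z i) : ∃ c, decodeFn M l c = z := by
  -- values appearing in `z`
  set ι := {v : Fin M // ∃ i, z i = v} with hι
  -- pairs containing a given value
  set T : ι → Finset (Fin l) :=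
    fun v => univ.filter (fun t => z (posIdx l t 0) = v.1 ∨ z (posIdx l t 1) = v.1) with hT
  have hHall : ∀ s : Finset ι, #s ≤ #(s.biUnion T) := by
    intro s
    set Q : Finset (Fin (2 * l)) := univ.filter (fun p => ∃ v ∈ s, z p = v.1) with hQ
    have hlow : 2 * #s ≤ #Q := by
      have hsub : s.biUnion (fun v => univ.filter (fun p => z p = v.1)) ⊆ Q := by
        intro p hp
        rw [hQ]
        simp only [Finset.mem_biUnion, Finset.mem_filter, Finset.mem_univ, true_and] at hp
        obtain ⟨v, hv, hpv⟩ := hp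
        exact Finset.mem_filter.2 ⟨Finset.mem_univ _, v, hv, hpv⟩
      have hdisj : ∀ v ∈ s, ∀ w ∈ s, v ≠ w →
          Disjoint (univ.filter (fun p => z p = v.1)) (univ.filter (fun p => z p = w.1)) := by
        intro v hv w hw hvw
        refine Finset.disjoint_left.2 ?_
        intro p hp hp'
        simp only [Finset.mem_filter] at hp hp'
        exact hvw (Subtype.ext (hp.2 ▸ hp'.2 ▸ rfl))
      have hcard := Finset.card_biUnion hdisj
      have h2 : ∀ v ∈ s, 2 ≤ #(univ.filter (fun p => z p = v.1)) := by
        intro v hv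
        obtain ⟨i, hi⟩ := v.2
        obtain ⟨j, hji, hj⟩ := hz i
        have : 1 < #(univ.filter (fun p => z p = v.1)) := by
          refine Finset.one_lt_card.2 ⟨j, ?_, i, ?_, hji⟩ <;>
            simp [hi, hj]
        omega
      calc 2 * #s = ∑ _v ∈ s, 2 := by rw [Finset.sum_const]; ring
        _ ≤ ∑ v ∈ s, #(univ.filter (fun p => z p = v.1)) := Finset.sum_le_sum h2
        _ = #(s.biUnion (fun v => univ.filter (fun p => z p = v.1))) := hcard.symm
        _ ≤ #Q := Finset.card_le_card hsub
    have hup : #Q ≤ #(s.biUnion T) * 2 := by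
      have hsub : Q ⊆ (s.biUnion T).biUnion (fun t => {posIdx l t 0, posIdx l t 1}) := by
        intro p hp
        rw [hQ] at hp
        simp only [Finset.mem_filter, Finset.mem_univ, true_and] at hp
        obtain ⟨v, hv, hpv⟩ := hp
        have ht : (⟨p.val / 2, by omega⟩ : Fin l) ∈ T v := by
          have hb : p.val % 2 < 2 := Nat.mod_lt _ (by norm_num)
          have hpos : posIdx l ⟨p.val / 2, by omega⟩ ⟨p.val % 2, hb⟩ = p := by
            apply Fin.ext; simp [posIdx]; omega
          simp only [hT, Finset.mem_filter, Finset.mem_univ, true_and]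
          rcases (by omega : p.val % 2 = 0 ∨ p.val % 2 = 1) with h0 | h1
          · left; rw [show (0 : Fin 2) = ⟨p.val % 2, hb⟩ by apply Fin.ext; simp [h0]]
            rw [hpos, hpv]
          · right; rw [show (1 : Fin 2) = ⟨p.val % 2, hb⟩ by apply Fin.ext; simp [h1]]
            rw [hpos, hpv]
        refine Finset.mem_biUnion.2 ⟨⟨p.val / 2, by omega⟩, Finset.mem_biUnion.2 ⟨v, hv, ht⟩, ?_⟩
        have hb : p.val % 2 < 2 := Nat.mod_lt _ (by norm_num)
        rcases (by omega : p.val % 2 = 0 ∨ p.val % 2 = 1) with h0 | h1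
        · refine Finset.mem_insert.2 (Or.inl ?_)
          apply Fin.ext; simp [posIdx]; omega
        · refine Finset.mem_insert.2 (Or.inr (Finset.mem_singleton.2 ?_))
          apply Fin.ext; simp [posIdx]; omega
      calc #Q ≤ #((s.biUnion T).biUnion (fun t => {posIdx l t 0, posIdx l t 1})) :=
            Finset.card_le_card hsub
        _ ≤ #(s.biUnion T) * 2 :=
            Finset.card_biUnion_le_card_mul _ _ _ (fun t _ => Finset.card_insert_le _ _ |>.trans
              (by simp))
    omega
  obtain ⟨f, hfinj, hf⟩ := (Finset.all_card_le_biUnion_card_iff_exists_injective T).1 hHall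
  -- which element of each pair is recorded
  set σ : Fin l → Fin 2 := fun t =>
    if h : ∃ v : ι, f v = t then (if z (posIdx l t 0) = h.choose.1 then 0 else 1) else 0 with hσ
  have rv_spec : ∀ v : ι, z (posIdx l (f v) (σ (f v))) = v.1 := by
    intro v
    have h : ∃ v' : ι, f v' = f v := ⟨v, rfl⟩
    have hch : h.choose = v := hfinj h.choose_spec
    have hmem := hf v
    simp only [hT, Finset.mem_filter, Finset.mem_univ, true_and] at hmem
    simp only [hσ, dif_pos h, hch]
    by_cases h0 : z (posIdx l (f v) 0) = v.1
    · simp [h0]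
    · simp only [if_neg h0]
      rcases hmem with h' | h'
      · exact absurd h' h0
      · exact h'
  -- the code
  set c : Fin l → Fin M × Fin l × Fin 2 := fun t =>
    (z (posIdx l t (σ t)),
     f ⟨z (posIdx l t ⟨1 - (σ t).val, by omega⟩), ⟨_, rfl⟩⟩,
     σ t) with hc
  refine ⟨c, ?_⟩
  funext p
  show (let t : Fin l := ⟨p.val / 2, by omega⟩;
    if ((c t).2.2 : ℕ) = p.val % 2 then (c t).1 else (c (c t).2.1).1) = z p
  set t : Fin l := ⟨p.val / 2, by omega⟩ with htdef
  have hct2 : (c t).2.2 = σ t := rfl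
  by_cases hb : ((σ t : Fin 2) : ℕ) = p.val % 2
  · have hb' : (σ t).val = p.val % 2 := hb
    have hpos : posIdx l t (σ t) = p := by
      apply Fin.ext
      have h1 : (posIdx l t (σ t)).val = 2 * (p.val / 2) + (σ t).val := rfl
      rw [h1, hb']; omega
    simp only [hct2, hb, if_true, hc]
    rw [hpos]
  · have hσlt : (σ t).val < 2 := (σ t).isLt
    have hblt : p.val % 2 < 2 := Nat.mod_lt _ (by norm_num)
    have hother : (1 - (σ t).val) = p.val % 2 := by omega
    have hpos : posIdx l t ⟨1 - (σ t).val, by omega⟩ = p := by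
      apply Fin.ext
      have h1 : (posIdx l t ⟨1 - (σ t).val, by omega⟩).val = 2 * (p.val / 2) + (1 - (σ t).val) := rfl
      rw [h1]; omega
    have : ((c t).2.2 : ℕ) = p.val % 2 ↔ False := by simp [hct2, hb]
    simp only [hct2, if_neg hb]
    show (c (c t).2.1).1 = z p
    have : (c t).2.1 = f ⟨z (posIdx l t ⟨1 - (σ t).val, by omega⟩), ⟨_, rfl⟩⟩ := rfl
    rw [this]
    have := rv_spec ⟨z (posIdx l t ⟨1 - (σ t).val, by omega⟩), ⟨_, rfl⟩⟩
    simp only [hc] at this ⊢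
    rw [this, hpos]

/-- The number of strings of length `2l` over an alphabet of size `M` in which
no character appears exactly once (every appearing character appears at least
twice) is at most `(2Ml)^l`. -/
theorem count_strings_no_unique_char (M l : ℕ) (hM : 0 < M) (hl : 0 < l) :
    Set.ncard {z : Fin (2 * l) → Fin M | ∀ i, ∃ j, j ≠ i ∧ z j = z i}
      ≤ (2 * M * l) ^ l := by
  classical
  have hsub : {z : Fin (2 * l) → Fin M | ∀ i, ∃ j, j ≠ i ∧ z j = z i}
      ⊆ Set.range (decodeFn M l) := by
    intro z hz
    obtain ⟨c, hcz⟩ := exists_code z hz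
    exact ⟨c, hcz⟩
  have h1 : Set.ncard {z : Fin (2 * l) → Fin M | ∀ i, ∃ j, j ≠ i ∧ z j = z i}
      ≤ (Set.range (decodeFn M l)).ncard :=
    Set.ncard_le_ncard hsub (Set.toFinite _)
  have h2 : (Set.range (decodeFn M l)).ncard
      ≤ Fintype.card (Fin l → Fin M × Fin l × Fin 2) := by
    rw [← Set.image_univ]
    calc ((decodeFn M l) '' Set.univ).ncard ≤ (Set.univ : Set (Fin l → Fin M × Fin l × Fin 2)).ncard :=
          Set.ncard_image_le Set.finite_univ
      _ = Fintype.card (Fin l → Fin M × Fin l × Fin 2) := by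
          rw [Set.ncard_univ, Nat.card_eq_fintype_card]
  have h3 : Fintype.card (Fin l → Fin M × Fin l × Fin 2) = (2 * M * l) ^ l := by
    rw [Fintype.card_fun]
    simp only [Fintype.card_prod, Fintype.card_fin]
    ring
  exact le_trans h1 (le_trans h2 (le_of_eq h3))
end

section
/- Let p : 𝕏×𝕐 → ℝ be measurable with 0 ≤ p ≤ U for a constant U ≥ 1, and M ≥ 2 a natural number. Then for all (x,y), |log((1/M)p(x,y) + (M-1)/M) - (1/M)(p(x,y)-1)| ≤ 2U²/M². -/
/-- For a density `p` with `0 ≤ p ≤ U`, `U ≥ 1`, and `M ≥ 2`: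
`|log((1/M)p + (M-1)/M) - (1/M)(p-1)| ≤ 2U²/M²`. -/
theorem log_linearization_bound
    {α : Type*} (p : α → ℝ) (U : ℝ) (hU : 1 ≤ U) (M : ℕ) (hM : 2 ≤ M)
    (hp_nonneg : ∀ z, 0 ≤ p z) (hp_le : ∀ z, p z ≤ U) :
    ∀ z, |Real.log ((1 / M) * p z + (M - 1) / M) - (1 / M) * (p z - 1)|
      ≤ 2 * U ^ 2 / M ^ 2 := by
  intro z
  have hM' : (2:ℝ) ≤ (M:ℝ) := by exact_mod_cast hM
  have hMpos : (0:ℝ) < (M:ℝ) := by linarith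
  have hq0 := hp_nonneg z
  have hqU := hp_le z
  generalize hqq : p z = q at hq0 hqU ⊢
  obtain ⟨y, hy⟩ : ∃ y, (1 / (M:ℝ)) * q + ((M:ℝ) - 1) / M = y := ⟨_, rfl⟩
  rw [hy]
  have hyhalf : (1:ℝ)/2 ≤ y := by
    have h1 : (1:ℝ)/2 ≤ ((M:ℝ) - 1) / M := by
      rw [div_le_div_iff₀ (by norm_num) hMpos]; linarith
    have h2 : (0:ℝ) ≤ (1 / (M:ℝ)) * q := by positivity
    linarith [hy]
  have hypos : (0:ℝ) < y := by linarith
  have hyd : y - 1 = (1 / M) * (q - 1) := by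
    rw [← hy]; field_simp; ring
  have hupper : Real.log y ≤ y - 1 := Real.log_le_sub_one_of_pos hypos
  have hlower : 1 - y⁻¹ ≤ Real.log y := by
    have := Real.log_le_sub_one_of_pos (inv_pos.mpr hypos)
    rw [Real.log_inv] at this
    linarith
  have hkey : y - 1 - Real.log y ≤ 2 * (y - 1)^2 := by
    have hyne : y ≠ 0 := ne_of_gt hypos
    have hc : y * y⁻¹ = 1 := mul_inv_cancel₀ hyne
    nlinarith [mul_nonneg (by linarith : (0:ℝ) ≤ 2*y - 1) (sq_nonneg (y-1)), sq_nonneg (y-1)]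
  have habs : |Real.log y - (1 / M) * (q - 1)| = y - 1 - Real.log y := by
    rw [← hyd, abs_sub_comm, abs_of_nonneg (by linarith)]
  rw [habs]
  have hsq : (q - 1)^2 ≤ U^2 := by nlinarith
  have hfin : 2 * (y - 1)^2 ≤ 2 * U^2 / M^2 := by
    rw [hyd]
    have he : (1/(M:ℝ) * (q-1))^2 = (q-1)^2 / (M:ℝ)^2 := by field_simp
    rw [he, mul_div_assoc']
    gcongr
  linarith
end

section
/- Let μ be a probability measure, p*, p bounded measurable with 0 ≤ p ≤ U, ∫ p* dμ = ∫ p dμ = 1, and q = p − 1. Then |M² ∫ log(1 + q/M)((1/M)p* + (M−1)/M) dμ − (−½‖p − p*‖²_{L²(μ)} + ½‖p*‖²_{L²(μ)} − ½)| ≤ C/M for a constant C depending only on U and ‖p*‖_∞, for all M ≥ 2. -/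
open MeasureTheory

/-!
Write `q = p - 1`, `y = q / M` and `w = p* / M + (M - 1) / M = 1 + (p* - 1) / M`. Since `p ≥ 0` and
`M ≥ 2` we have `y ≥ -1/2`, where `log (1 + y) = y - y² / 2 + O(|y|³)` uniformly. Hence pointwise
`M² log (1 + y) w = M q + q (p* - 1) - q² / 2 + O(1 / M)`, with a constant depending only on the
bounds for `q` and `p*`. The term `M q` integrates to `0`, and by `∫ p = ∫ p* = 1` the rest
integrates to `-½ ‖p - p*‖² + ½ ‖p*‖² - ½`.
-/

theorem Real.abs_log_one_add_sub_add_sq_div_two_le {y : ℝ} (hy : -(1 / 2) ≤ y) :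
    |Real.log (1 + y) - y + y ^ 2 / 2| ≤ 3 * |y| ^ 3 := by
  rcases le_or_gt y (1 / 2) with hy' | hy'
  · have hy_abs : |y| ≤ 1 / 2 := abs_le.2 ⟨hy, hy'⟩
    have h := Real.abs_log_sub_add_sum_range_le (x := -y) (by rw [abs_neg]; linarith) 2
    norm_num [Finset.sum_range_succ] at h
    calc |Real.log (1 + y) - y + y ^ 2 / 2|
        = |-y + y ^ 2 / 2 + Real.log (1 + y)| := by ring_nf
      _ ≤ |y| ^ 3 / (1 - |y|) := h
      _ ≤ 3 * |y| ^ 3 := by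
          rw [div_le_iff₀ (by linarith)]
          nlinarith [pow_nonneg (abs_nonneg y) 3]
  · have h0 : 0 ≤ Real.log (1 + y) := Real.log_nonneg (by linarith)
    have h1 : Real.log (1 + y) ≤ y := by
      linarith [Real.log_le_sub_one_of_pos (x := 1 + y) (by linarith)]
    have hy0 : 0 < y := by linarith
    rw [abs_of_pos hy0, abs_le]
    constructor <;> nlinarith [mul_pos hy0 hy0]

theorem Real.abs_log_one_add_le {y : ℝ} (hy : -(1 / 2) ≤ y) : |Real.log (1 + y)| ≤ 2 * |y| := by
  have hupper : Real.log (1 + y) ≤ y := by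
    linarith [Real.log_le_sub_one_of_pos (x := 1 + y) (by linarith)]
  rcases le_total 0 y with hy0 | hy0
  · rw [abs_of_nonneg (Real.log_nonneg (by linarith)), abs_of_nonneg hy0]
    linarith
  · have hinv : (1 + y)⁻¹ ≤ 1 - 2 * y := by
      rw [inv_le_iff_one_le_mul₀ (by linarith)]; nlinarith
    have hlower := Real.one_sub_inv_le_log_of_pos (x := 1 + y) (by linarith)
    rw [abs_of_nonpos (by linarith), abs_of_nonpos hy0]
    linarith

theorem abs_pseudolikelihood_integrand_sub_expansion_le {M q s K B : ℝ} (hM : 2 ≤ M)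
    (hq : -1 ≤ q) (hqK : |q| ≤ K) (hsB : |s| ≤ B) :
    |M ^ 2 * (Real.log (1 + q / M) * (1 / M * s + (M - 1) / M))
        - (M * q + q * (s - 1) - q ^ 2 / 2)|
      ≤ (B + 1) * (3 * K ^ 3 + K ^ 2 / 2) / M := by
  have hM0 : 0 < M := by linarith
  set y := q / M with hy_def
  set w := 1 / M * s + (M - 1) / M with hw_def
  have hy : -(1 / 2) ≤ y := by rw [hy_def, le_div_iff₀ hM0]; linarith
  have hyK : |y| ≤ K / M := by rw [hy_def, abs_div, abs_of_pos hM0]; gcongr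
  have hw : |w| ≤ B + 1 := by
    calc |w| ≤ |1 / M * s| + |(M - 1) / M| := abs_add_le _ _
      _ ≤ B + 1 := by
        rw [abs_mul, abs_of_pos (by positivity : 0 < 1 / M),
          abs_of_nonneg (div_nonneg (by linarith) hM0.le)]
        have : 1 / M ≤ 1 := by rw [div_le_one hM0]; linarith
        have : (M - 1) / M ≤ 1 := by rw [div_le_one hM0]; linarith
        nlinarith [abs_nonneg s]
  have hsplit : M ^ 2 * (Real.log (1 + y) * w) - (M * q + q * (s - 1) - q ^ 2 / 2)
      = M ^ 2 * (Real.log (1 + y) - y + y ^ 2 / 2) * w + q ^ 2 * (1 - s) / (2 * M) := by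
    rw [hy_def, hw_def]; field_simp; ring
  have htaylor : |M ^ 2 * (Real.log (1 + y) - y + y ^ 2 / 2) * w| ≤ (B + 1) * (3 * K ^ 3) / M := by
    calc |M ^ 2 * (Real.log (1 + y) - y + y ^ 2 / 2) * w|
        = M ^ 2 * |Real.log (1 + y) - y + y ^ 2 / 2| * |w| := by
          rw [abs_mul, abs_mul, abs_of_pos (by positivity : 0 < M ^ 2)]
      _ ≤ M ^ 2 * (3 * (K / M) ^ 3) * (B + 1) := by
          have : 0 ≤ K := (abs_nonneg q).trans hqK
          gcongr
          exact (Real.abs_log_one_add_sub_add_sq_div_two_le hy).trans (by gcongr)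
      _ = (B + 1) * (3 * K ^ 3) / M := by field_simp
  have hquad : |q ^ 2 * (1 - s) / (2 * M)| ≤ (B + 1) * (K ^ 2 / 2) / M := by
    have h1s : |1 - s| ≤ B + 1 := by
      calc |1 - s| ≤ |1| + |s| := abs_sub _ _
        _ ≤ B + 1 := by rw [abs_one]; linarith
    calc |q ^ 2 * (1 - s) / (2 * M)| = |q| ^ 2 * |1 - s| / (2 * M) := by
          rw [abs_div, abs_mul, abs_pow, abs_of_pos (by positivity : 0 < 2 * M)]
      _ ≤ K ^ 2 * (B + 1) / (2 * M) := by gcongr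
      _ = (B + 1) * (K ^ 2 / 2) / M := by field_simp
  calc _ = _ := by rw [hsplit]
    _ ≤ _ := abs_add_le _ _
    _ ≤ _ := add_le_add htaylor hquad
    _ = _ := by ring

section

variable {α : Type*} [MeasurableSpace α] {μ : Measure α} [IsProbabilityMeasure μ] {p s : α → ℝ}

theorem integrable_pseudolikelihood_expansion (hp : MemLp p 2 μ) (hs : MemLp s 2 μ) (M : ℝ) :
    Integrable (fun z => M * (p z - 1) + (p z - 1) * (s z - 1) - (p z - 1) ^ 2 / 2) μ := by
  have hq : MemLp (fun z => p z - 1) 2 μ := hp.sub (memLp_const 1)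
  have hs' : MemLp (fun z => s z - 1) 2 μ := hs.sub (memLp_const 1)
  exact (((hq.integrable one_le_two).const_mul M).add (hq.integrable_mul hs')).sub
    (hq.integrable_sq.div_const 2)

theorem integral_pseudolikelihood_expansion (hp : MemLp p 2 μ) (hs : MemLp s 2 μ)
    (hip : ∫ z, p z ∂μ = 1) (his : ∫ z, s z ∂μ = 1) (M : ℝ) :
    ∫ z, M * (p z - 1) + (p z - 1) * (s z - 1) - (p z - 1) ^ 2 / 2 ∂μ
      = -(1 / 2) * ∫ z, (p z - s z) ^ 2 ∂μ + (1 / 2) * ∫ z, s z ^ 2 ∂μ - 1 / 2 := by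
  have := hp.integrable one_le_two
  have := hs.integrable one_le_two
  have := (hp.sub hs).integrable_sq
  have := hs.integrable_sq
  calc ∫ z, M * (p z - 1) + (p z - 1) * (s z - 1) - (p z - 1) ^ 2 / 2 ∂μ
      = ∫ z, (M * (p z - 1) - (s z - 1) - 1 / 2)
          + (-(1 / 2) * (p z - s z) ^ 2 + (1 / 2) * s z ^ 2) ∂μ := by
        congr with z; ring
    _ = _ := by
      rw [integral_add, integral_sub, integral_sub, integral_const_mul, integral_sub,
        integral_sub, integral_add, integral_const_mul, integral_const_mul]
      · simp [hip, his]; ring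
      all_goals fun_prop

end

theorem abs_integral_sub_integral_le_of_abs_sub_le {α : Type*} [MeasurableSpace α]
    {μ : Measure α} [IsProbabilityMeasure μ] {f g : α → ℝ} {C : ℝ} (hf : Integrable f μ)
    (hg : Integrable g μ) (hfg : ∀ z, |f z - g z| ≤ C) :
    |∫ z, f z ∂μ - ∫ z, g z ∂μ| ≤ C := by
  rw [← integral_sub hf hg]
  simpa using norm_integral_le_of_norm_le_const (μ := μ) (f := fun z => f z - g z)
    (.of_forall hfg)

/-- Quantitative asymptotics of the expected pseudo-log-likelihood:
`|M² ∫ log(1+q/M)((1/M)p* + (M−1)/M) dμ − (−½‖p−p*‖² + ½‖p*‖² − ½)| ≤ C/M`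
for a constant `C` depending only on the bounds `U` (on `p`) and `B` (on `p*`). -/
theorem pseudolikelihood_asymptotics
    {α : Type*} [MeasurableSpace α] (U B : ℝ) (hU : 0 < U) (hB : 0 < B) :
    ∃ C : ℝ, 0 ≤ C ∧
      ∀ (μ : Measure α), IsProbabilityMeasure μ →
      ∀ (p pstar : α → ℝ), Measurable p → Measurable pstar →
        (∀ z, 0 ≤ p z) → (∀ z, p z ≤ U) → (∀ z, |pstar z| ≤ B) →
        (∫ z, p z ∂μ = 1) → (∫ z, pstar z ∂μ = 1) →
        ∀ M : ℕ, 2 ≤ M →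
          |(M : ℝ) ^ 2 * ∫ z, Real.log (1 + (p z - 1) / M)
              * ((1 / M) * pstar z + ((M : ℝ) - 1) / M) ∂μ
            - (-(1 / 2) * ∫ z, (p z - pstar z) ^ 2 ∂μ
                + (1 / 2) * ∫ z, (pstar z) ^ 2 ∂μ - 1 / 2)|
            ≤ C / M := by
  refine ⟨(B + 1) * (3 * (U + 1) ^ 3 + (U + 1) ^ 2 / 2), by positivity, ?_⟩
  intro μ _ p pstar hp hps hp0 hpU hpsB hip hips M hM
  have hM2 : (2 : ℝ) ≤ M := by exact_mod_cast hM
  have hq : ∀ z, -1 ≤ p z - 1 := fun z => by linarith [hp0 z]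
  have hqK : ∀ z, |p z - 1| ≤ U + 1 := fun z =>
    abs_le.2 ⟨by linarith [hp0 z], by linarith [hpU z]⟩
  have hp2 : MemLp p 2 μ := .of_bound hp.aestronglyMeasurable U <| .of_forall fun z => by
    rw [Real.norm_eq_abs, abs_of_nonneg (hp0 z)]; exact hpU z
  have hps2 : MemLp pstar 2 μ := .of_bound hps.aestronglyMeasurable B <| .of_forall hpsB
  have hlik : Integrable (fun z => Real.log (1 + (p z - 1) / M)
      * ((1 / M) * pstar z + ((M : ℝ) - 1) / M)) μ := by
    refine (hps2.integrable one_le_two |>.const_mul _ |>.add (integrable_const _)).bdd_mul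
      (Real.measurable_log.comp (by fun_prop)).aestronglyMeasurable (c := 2 * (U + 1))
      (.of_forall fun z => ?_)
    have hy : -(1 / 2) ≤ (p z - 1) / M := by rw [le_div_iff₀ (by linarith)]; linarith [hq z]
    have hyK : |(p z - 1) / M| ≤ U + 1 := by
      rw [abs_div, Nat.abs_cast]
      exact (div_le_self (abs_nonneg _) (by linarith)).trans (hqK z)
    rw [Real.norm_eq_abs]
    linarith [Real.abs_log_one_add_le hy]
  rw [← integral_pseudolikelihood_expansion hp2 hps2 hip hips M, ← integral_const_mul]
  exact abs_integral_sub_integral_le_of_abs_sub_le (hlik.const_mul _)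
    (integrable_pseudolikelihood_expansion hp2 hps2 M) fun z =>
      abs_pseudolikelihood_integrand_sub_expansion_le hM2 (hq z) (hqK z) (hpsB z)
end

section
/- Let ρ, ρ* ∈ (−1,1) and let p^ρ(x,y) = φ^ρ_{X,Y}(x,y)/(φ(x)φ(y)) be the ratio of the bivariate standard-normal density with correlation ρ to the product of standard normal densities. Then ‖p^{ρ*}‖²_{L²(μ⊗ν)} = 1/(1−ρ*²) and ‖p^{ρ*} − p^ρ‖²_{L²(μ⊗ν)} = 1/(1−ρ²) + 1/(1−ρ*²) − 2/(1−ρρ*), where μ = ν = N(0,1). -/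
open MeasureTheory ProbabilityTheory

/-- Standard normal density on `ℝ`. -/
noncomputable def stdNormalPDF (x : ℝ) : ℝ :=
  (Real.sqrt (2 * Real.pi))⁻¹ * Real.exp (-x ^ 2 / 2)

/-- Density of the centered bivariate normal with unit variances and
correlation `ρ`. -/
noncomputable def bivNormalPDF (ρ : ℝ) (z : ℝ × ℝ) : ℝ :=
  (2 * Real.pi * Real.sqrt (1 - ρ ^ 2))⁻¹ *
    Real.exp (-(z.1 ^ 2 - 2 * ρ * z.1 * z.2 + z.2 ^ 2) / (2 * (1 - ρ ^ 2)))

/-- The density `p^ρ = φ^ρ_{X,Y}/(φ ⊗ φ)` of the bivariate normal with respect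
to the product of its standard normal marginals. -/
noncomputable def corrDensity (ρ : ℝ) (z : ℝ × ℝ) : ℝ :=
  bivNormalPDF ρ z / (stdNormalPDF z.1 * stdNormalPDF z.2)

open Real
open scoped NNReal ENNReal

lemma stdNormalPDF_eq : stdNormalPDF = gaussianPDFReal 0 1 := by
  funext x
  simp [stdNormalPDF, gaussianPDFReal]

lemma stdNormalPDF_pos (x : ℝ) : 0 < stdNormalPDF x := by
  rw [stdNormalPDF_eq]; exact gaussianPDFReal_pos 0 1 x one_ne_zero

lemma measurable_stdNormalPDF : Measurable stdNormalPDF := by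
  rw [stdNormalPDF_eq]; exact measurable_gaussianPDFReal 0 1

lemma gaussian_prod_eq :
    (gaussianReal 0 1).prod (gaussianReal 0 1)
      = (volume : Measure (ℝ × ℝ)).withDensity
          (fun z => ENNReal.ofReal (stdNormalPDF z.1) * ENNReal.ofReal (stdNormalPDF z.2)) := by
  have hpdf : gaussianPDF 0 1 = fun x => ENNReal.ofReal (stdNormalPDF x) := by
    funext x; rw [gaussianPDF, stdNormalPDF_eq]
  rw [gaussianReal_of_var_ne_zero 0 one_ne_zero, hpdf]
  refine Measure.prod_eq fun s t hs ht => ?_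
  rw [withDensity_apply _ (hs.prod ht), withDensity_apply _ hs, withDensity_apply _ ht,
    Measure.volume_eq_prod ℝ ℝ, ← Measure.prod_restrict]
  exact lintegral_prod_mul (measurable_stdNormalPDF.ennreal_ofReal.aemeasurable)
    (measurable_stdNormalPDF.ennreal_ofReal.aemeasurable)

lemma weight_meas : Measurable (fun z : ℝ × ℝ => stdNormalPDF z.1 * stdNormalPDF z.2) :=
  (measurable_stdNormalPDF.comp measurable_fst).mul
    (measurable_stdNormalPDF.comp measurable_snd)

lemma weight_eq : (fun z : ℝ × ℝ =>
      ENNReal.ofReal (stdNormalPDF z.1) * ENNReal.ofReal (stdNormalPDF z.2))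
    = fun z => ((Real.toNNReal (stdNormalPDF z.1 * stdNormalPDF z.2) : ℝ≥0) : ℝ≥0∞) := by
  funext z
  rw [← ENNReal.ofReal_mul (le_of_lt (stdNormalPDF_pos _))]
  rfl

lemma integral_gaussian_prod (f : ℝ × ℝ → ℝ) :
    ∫ z, f z ∂((gaussianReal 0 1).prod (gaussianReal 0 1))
      = ∫ z : ℝ × ℝ, (stdNormalPDF z.1 * stdNormalPDF z.2) * f z := by
  rw [gaussian_prod_eq, weight_eq,
    integral_withDensity_eq_integral_smul weight_meas.real_toNNReal f]
  congr 1; funext z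
  rw [NNReal.smul_def, Real.coe_toNNReal _
    (mul_nonneg (stdNormalPDF_pos _).le (stdNormalPDF_pos _).le)]
  rfl

lemma integrable_gaussian_prod_iff (f : ℝ × ℝ → ℝ) :
    Integrable f ((gaussianReal 0 1).prod (gaussianReal 0 1))
      ↔ Integrable (fun z : ℝ × ℝ => f z * (stdNormalPDF z.1 * stdNormalPDF z.2)) := by
  have hm : Measurable fun z : ℝ × ℝ =>
      ENNReal.ofReal (stdNormalPDF z.1) * ENNReal.ofReal (stdNormalPDF z.2) :=
    ((measurable_stdNormalPDF.comp measurable_fst).ennreal_ofReal).mul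
      ((measurable_stdNormalPDF.comp measurable_snd).ennreal_ofReal)
  rw [gaussian_prod_eq, integrable_withDensity_iff hm
    (ae_of_all _ fun z => ENNReal.mul_lt_top ENNReal.ofReal_lt_top ENNReal.ofReal_lt_top)]
  constructor <;> intro h <;> refine h.congr (ae_of_all _ fun z => ?_) <;>
    simp only [← ENNReal.ofReal_mul (stdNormalPDF_pos _).le,
      ENNReal.toReal_ofReal (mul_nonneg (stdNormalPDF_pos _).le (stdNormalPDF_pos _).le)]

lemma gauss2_integrable {A B : ℝ} (hB : |B| < A) :
    Integrable (fun z : ℝ × ℝ =>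
      Real.exp (-(A * z.1 ^ 2 - 2 * B * z.1 * z.2 + A * z.2 ^ 2) / 2)) volume := by
  have hδ : 0 < (A - |B|) / 2 := by linarith
  have hbound : Integrable (fun z : ℝ × ℝ =>
      Real.exp (-((A - |B|) / 2) * z.1 ^ 2) * Real.exp (-((A - |B|) / 2) * z.2 ^ 2)) volume := by
    rw [Measure.volume_eq_prod ℝ ℝ]
    exact (integrable_exp_neg_mul_sq hδ).mul_prod (integrable_exp_neg_mul_sq hδ)
  refine hbound.mono' (Continuous.aestronglyMeasurable (by continuity)) (ae_of_all _ fun z => ?_)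
  rw [Real.norm_eq_abs, abs_exp, ← Real.exp_add]
  apply Real.exp_le_exp.2
  have h1 : 2 * B * z.1 * z.2 ≤ |B| * (z.1 ^ 2 + z.2 ^ 2) := by
    rcases le_or_gt 0 B with hb | hb
    · nlinarith [abs_nonneg B, le_abs_self B, sq_nonneg (z.1 - z.2), sq_nonneg (z.1 + z.2),
        neg_abs_le B]
    · nlinarith [abs_nonneg B, le_abs_self B, sq_nonneg (z.1 - z.2), sq_nonneg (z.1 + z.2),
        neg_abs_le B]
  nlinarith [sq_nonneg z.1, sq_nonneg z.2]

lemma gauss2_integral {A B : ℝ} (hB : |B| < A) :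
    ∫ z : ℝ × ℝ, Real.exp (-(A * z.1 ^ 2 - 2 * B * z.1 * z.2 + A * z.2 ^ 2) / 2)
      = 2 * π / Real.sqrt (A ^ 2 - B ^ 2) := by
  have hA : 0 < A := (abs_nonneg B).trans_lt hB
  have hAB : 0 < A ^ 2 - B ^ 2 := by nlinarith [neg_abs_le B, le_abs_self B, abs_nonneg B]
  have key : ∀ x y : ℝ,
      -(A * x ^ 2 - 2 * B * x * y + A * y ^ 2) / 2
        = -((A ^ 2 - B ^ 2) / A / 2 * x ^ 2) + -(A / 2 * (y - B * x / A) ^ 2) := by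
    intro x y; field_simp; ring
  rw [Measure.volume_eq_prod ℝ ℝ, integral_prod _ (by
    rw [← Measure.volume_eq_prod ℝ ℝ]; exact gauss2_integrable hB)]
  have inner : ∀ x : ℝ, (∫ y : ℝ,
      Real.exp (-(A * x ^ 2 - 2 * B * x * y + A * y ^ 2) / 2))
      = Real.exp (-((A ^ 2 - B ^ 2) / A / 2) * x ^ 2) * Real.sqrt (π / (A / 2)) := by
    intro x
    simp_rw [key x, Real.exp_add, integral_const_mul]
    congr 1
    · rw [neg_mul]
    · have := integral_sub_right_eq_self (μ := (volume : Measure ℝ))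
        (fun y => Real.exp (-(A / 2 * y ^ 2))) (B * x / A)
      rw [this]
      simpa [neg_mul] using integral_gaussian (A / 2)
  simp_rw [inner, integral_mul_const, integral_gaussian]
  rw [← Real.sqrt_mul (by positivity)]
  rw [show π / ((A ^ 2 - B ^ 2) / A / 2) * (π / (A / 2)) = (2 * π) ^ 2 / (A ^ 2 - B ^ 2) by
    field_simp]
  rw [Real.sqrt_div' _ ?_, Real.sqrt_sq (by positivity)]
  · positivity

lemma exp_aux {k0 k1 k2 : ℝ} (h0 : k0 ≠ 0) {e0 e1 e2 E : ℝ}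
    (he : E = e1 + e2 - e0) :
    (k0 * Real.exp e0) *
      ((k1 * Real.exp e1) / (k0 * Real.exp e0) * ((k2 * Real.exp e2) / (k0 * Real.exp e0)))
      = (k1 * k2 / k0) * Real.exp E := by
  subst he
  rw [Real.exp_sub, Real.exp_add]
  field_simp [Real.exp_ne_zero]

lemma corr_prod_key (ρ1 ρ2 : ℝ) (h1 : ρ1 ∈ Set.Ioo (-1 : ℝ) 1) (h2 : ρ2 ∈ Set.Ioo (-1 : ℝ) 1) :
    Integrable (fun z => corrDensity ρ1 z * corrDensity ρ2 z)
        ((gaussianReal 0 1).prod (gaussianReal 0 1)) ∧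
    ∫ z, corrDensity ρ1 z * corrDensity ρ2 z
        ∂((gaussianReal 0 1).prod (gaussianReal 0 1)) = 1 / (1 - ρ1 * ρ2) := by
  obtain ⟨h1l, h1r⟩ := h1
  obtain ⟨h2l, h2r⟩ := h2
  have hd1 : (0 : ℝ) < 1 - ρ1 ^ 2 := by nlinarith
  have hd2 : (0 : ℝ) < 1 - ρ2 ^ 2 := by nlinarith
  have hρρ : (0 : ℝ) < 1 - ρ1 * ρ2 := by nlinarith
  set A : ℝ := 1 / (1 - ρ1 ^ 2) + 1 / (1 - ρ2 ^ 2) - 1 with hA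
  set B : ℝ := ρ1 / (1 - ρ1 ^ 2) + ρ2 / (1 - ρ2 ^ 2) with hB
  have p1 : (0:ℝ) < 1 + ρ1 := by linarith
  have p2 : (0:ℝ) < 1 + ρ2 := by linarith
  have q1 : (0:ℝ) < 1 - ρ1 := by linarith
  have q2 : (0:ℝ) < 1 - ρ2 := by linarith
  have hAmB : A - B = (1 - ρ1 * ρ2) / ((1 + ρ1) * (1 + ρ2)) := by
    rw [hA, hB, eq_div_iff (by positivity)]
    field_simp [hd1.ne', hd2.ne']
    ring
  have hApB : A + B = (1 - ρ1 * ρ2) / ((1 - ρ1) * (1 - ρ2)) := by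
    rw [hA, hB, eq_div_iff (by positivity)]
    field_simp [hd1.ne', hd2.ne']
    ring
  have hAmB' : 0 < A - B := hAmB ▸ div_pos hρρ (by positivity)
  have hApB' : 0 < A + B := hApB ▸ div_pos hρρ (by positivity)
  have habs : |B| < A := abs_lt.2 ⟨by linarith, by linarith⟩
  have hA2B2 : A ^ 2 - B ^ 2 = (1 - ρ1 * ρ2) ^ 2 / ((1 - ρ1 ^ 2) * (1 - ρ2 ^ 2)) := by
    have : A ^ 2 - B ^ 2 = (A - B) * (A + B) := by ring
    rw [this, hAmB, hApB]
    rw [div_mul_div_comm]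
    congr 1
    · ring
    · ring
  have hsqrt : Real.sqrt (A ^ 2 - B ^ 2)
      = (1 - ρ1 * ρ2) / (Real.sqrt (1 - ρ1 ^ 2) * Real.sqrt (1 - ρ2 ^ 2)) := by
    rw [hA2B2, Real.sqrt_div (by positivity), Real.sqrt_sq hρρ.le,
      Real.sqrt_mul hd1.le]
  set c : ℝ := (2 * π * Real.sqrt (1 - ρ1 ^ 2))⁻¹ * (2 * π * Real.sqrt (1 - ρ2 ^ 2))⁻¹ / (2 * π)⁻¹
    with hc
  have hw : ∀ z : ℝ × ℝ, stdNormalPDF z.1 * stdNormalPDF z.2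
      = (2 * π)⁻¹ * Real.exp (-(z.1 ^ 2 + z.2 ^ 2) / 2) := by
    intro z
    rw [stdNormalPDF, stdNormalPDF, mul_mul_mul_comm, ← Real.exp_add, ← mul_inv,
      Real.mul_self_sqrt (by positivity)]
    congr 1
    ring
  have hpt : ∀ z : ℝ × ℝ, stdNormalPDF z.1 * stdNormalPDF z.2
        * (corrDensity ρ1 z * corrDensity ρ2 z)
      = c * Real.exp (-(A * z.1 ^ 2 - 2 * B * z.1 * z.2 + A * z.2 ^ 2) / 2) := by
    intro z
    rw [corrDensity, corrDensity, bivNormalPDF, bivNormalPDF, hw z, hc]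
    exact exp_aux (by positivity) (by rw [hA, hB]; field_simp; ring)
  have hint : Integrable (fun z => corrDensity ρ1 z * corrDensity ρ2 z)
      ((gaussianReal 0 1).prod (gaussianReal 0 1)) := by
    rw [integrable_gaussian_prod_iff]
    have : (fun z : ℝ × ℝ => corrDensity ρ1 z * corrDensity ρ2 z
        * (stdNormalPDF z.1 * stdNormalPDF z.2))
        = fun z : ℝ × ℝ =>
          c * Real.exp (-(A * z.1 ^ 2 - 2 * B * z.1 * z.2 + A * z.2 ^ 2) / 2) := by
      funext z; rw [← hpt z]; ring
    rw [this]
    exact (gauss2_integrable habs).const_mul c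
  refine ⟨hint, ?_⟩
  rw [integral_gaussian_prod]
  calc ∫ z : ℝ × ℝ, stdNormalPDF z.1 * stdNormalPDF z.2
        * (corrDensity ρ1 z * corrDensity ρ2 z)
      = ∫ z : ℝ × ℝ, c * Real.exp (-(A * z.1 ^ 2 - 2 * B * z.1 * z.2 + A * z.2 ^ 2) / 2) := by
        exact integral_congr_ae (ae_of_all _ hpt)
    _ = c * (2 * π / Real.sqrt (A ^ 2 - B ^ 2)) := by
        rw [integral_const_mul, gauss2_integral habs]
    _ = 1 / (1 - ρ1 * ρ2) := by
        rw [hsqrt, hc]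
        have s1 : (0:ℝ) < Real.sqrt (1 - ρ1 ^ 2) := Real.sqrt_pos.2 hd1
        have s2 : (0:ℝ) < Real.sqrt (1 - ρ2 ^ 2) := Real.sqrt_pos.2 hd2
        have hπ : (0:ℝ) < π := Real.pi_pos
        field_simp [hρρ.ne']

/-- `L²(μ⊗ν)` norms of the correlation densities, `μ = ν = N(0,1)`:
`‖p^{ρ*}‖² = 1/(1−ρ*²)` and
`‖p^{ρ*} − p^ρ‖² = 1/(1−ρ²) + 1/(1−ρ*²) − 2/(1−ρρ*)`. -/
theorem corrDensity_L2_norms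
    (ρ ρstar : ℝ) (hρ : ρ ∈ Set.Ioo (-1 : ℝ) 1) (hρstar : ρstar ∈ Set.Ioo (-1 : ℝ) 1) :
    (∫ z, (corrDensity ρstar z) ^ 2
        ∂((gaussianReal 0 1).prod (gaussianReal 0 1))
      = 1 / (1 - ρstar ^ 2)) ∧
    (∫ z, (corrDensity ρstar z - corrDensity ρ z) ^ 2
        ∂((gaussianReal 0 1).prod (gaussianReal 0 1))
      = 1 / (1 - ρ ^ 2) + 1 / (1 - ρstar ^ 2) - 2 / (1 - ρ * ρstar)) := by
  have h11 := corr_prod_key ρstar ρstar hρstar hρstar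
  have h00 := corr_prod_key ρ ρ hρ hρ
  have h10 := corr_prod_key ρstar ρ hρstar hρ
  constructor
  · have hfun : (fun z : ℝ × ℝ => (corrDensity ρstar z) ^ 2)
        = fun z => corrDensity ρstar z * corrDensity ρstar z := by
      funext z; ring
    rw [hfun, h11.2]
    rw [show ρstar * ρstar = ρstar ^ 2 by ring]
  · have hfun : (fun z : ℝ × ℝ => (corrDensity ρstar z - corrDensity ρ z) ^ 2)
        = fun z => (corrDensity ρstar z * corrDensity ρstar z
            - 2 * (corrDensity ρstar z * corrDensity ρ z))
          + corrDensity ρ z * corrDensity ρ z := by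
      funext z; ring
    have hsub : Integrable (fun z => corrDensity ρstar z * corrDensity ρstar z
        - 2 * (corrDensity ρstar z * corrDensity ρ z))
        ((gaussianReal 0 1).prod (gaussianReal 0 1)) := h11.1.sub (h10.1.const_mul 2)
    rw [hfun, integral_add hsub h00.1,
      integral_sub h11.1 (h10.1.const_mul 2), integral_const_mul, h11.2, h10.2, h00.2]
    have hρρ : (1:ℝ) - ρstar * ρ = 1 - ρ * ρstar := by ring
    rw [hρρ]
    have d0 : (1:ℝ) - ρ ^ 2 ≠ 0 := by
      obtain ⟨a, b⟩ := hρ; nlinarith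
    have d1 : (1:ℝ) - ρstar ^ 2 ≠ 0 := by
      obtain ⟨a, b⟩ := hρstar; nlinarith
    have d2 : (1:ℝ) - ρ * ρstar ≠ 0 := by
      obtain ⟨a, b⟩ := hρ; obtain ⟨a', b'⟩ := hρstar; nlinarith
    rw [show ρstar * ρstar = ρstar ^ 2 by ring, show ρ * ρ = ρ ^ 2 by ring]
    field_simp
    ring
end
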